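/- Let B be a commutative bialgebra, t : S(B)→k a linear map with t(1)=1 and T the associated time-ordered product, and let Λ : S(B)⁺→B be any linear map. Define the renormalized time-ordered product T̄ on S(B)⁺ by T̄(a) = Σ_{π∈Π_m} T(Λ(b^1)∨⋯∨Λ(b^k)) for a∈S^m(B), where for π={B_1,…,B_k}∈Π_m, b^i := {a|B_i}. Then for every a∈B and a formal variable λ, T̄(e^{λa}) = T(e^{λ ā(λ)}) as an identity of formal power series in λ with coefficients in S(B), where a^n := a∨⋯∨a (n factors), e^{λa} := 1 + Σ_{n≥1} λ^n a^n/n!, T̄(e^{λa}) := 1 + Σ_{n≥1} λ^n T̄(a^n)/n!, and ā(λ) := Σ_{n≥1} λ^{n−1} Λ(a^n)/n! = Λ((e^{λa}−1)/λ). -/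

import Mathlib

open scoped TensorProduct

noncomputable section

/-- Each block of a finite partition is nonempty. -/
lemma partCardPos' {n : ℕ} (P : Finpartition (Finset.univ : Finset (Fin n)))
    {b : Finset (Fin n)} (hb : b ∈ P.parts) : 0 < b.card :=
  Finset.card_pos.mpr (P.nonempty_of_mem_parts hb)

variable {k : Type*} [Field k] [CharZero k]
variable {B : Type*} [CommRing B] [Bialgebra k B]
variable {S : Type*} [CommRing S] [Algebra k S]

/-- The augmentation ideal `S(B)⁺` (the ideal generated by `B` inside `S(B)`),
as a `k`-submodule. -/
def SBplus (ι : B →ₗ[k] S) : Submodule k S :=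
  (Ideal.span (Set.range ι)).restrictScalars k

lemma pow_mem_SBplus (ι : B →ₗ[k] S) (a : B) (n : ℕ) (hn : 0 < n) :
    (ι a) ^ n ∈ SBplus ι :=
  Ideal.pow_mem_of_mem _ (Ideal.subset_span (Set.mem_range_self a)) n hn

/-- The time-ordered product `T(a) = Σ t(a⟨1⟩) a⟨2⟩` associated to `t : S(B) → k`. -/
def Tord17 (δS : S →ₐ[k] S ⊗[k] S) (t : S →ₗ[k] k) : S →ₗ[k] S :=
  (TensorProduct.lid k S).toLinearMap ∘ₗ
    TensorProduct.map t LinearMap.id ∘ₗ δS.toLinearMap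

/-- The renormalized time-ordered product on the powers of `a ∈ B`:
`T̄(a^n) = Σ_{π ∈ Π_n} T(Λ(b^1) ∨ ⋯ ∨ Λ(b^k))`, where `b^i = a^{|B_i|}`. -/
def Tbar17 (δS : S →ₐ[k] S ⊗[k] S) (t : S →ₗ[k] k) (ι : B →ₗ[k] S)
    (Λ : SBplus ι →ₗ[k] B) (a : B) (n : ℕ) : S :=
  ∑ P : Finpartition (Finset.univ : Finset (Fin n)),
    Tord17 δS t (∏ b ∈ P.parts.attach,
      ι (Λ ⟨(ι a) ^ (b.1.card), pow_mem_SBplus ι a _ (partCardPos' P b.2)⟩))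

/-- `exp z = Σ_{j ≥ 0} z^j/j!` for a power series `z` with zero constant term,
defined coefficientwise. -/
def expPS17 (z : PowerSeries S) : PowerSeries S :=
  PowerSeries.mk fun m =>
    ∑ j ∈ Finset.range (m + 1), ((j.factorial : k)⁻¹) • PowerSeries.coeff (R := S) m (z ^ j)

/-!
`T` is linear and `T(1) = 1`, so the identity is `T` applied to the exponential formula
`exp(Σₙ gₙ λⁿ/n!) = Σₙ (Σ_{π ∈ Πₙ} ∏_{B ∈ π} g_{|B|}) λⁿ/n!` with `gₙ = Λ(aⁿ)`.
Both sides satisfy the same recursion: removing the block of a fixed point from a partition,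
and differentiating `E = exp z` via `E' = E z'`.
-/

open Finset PowerSeries
open scoped Nat

namespace Finpartition

variable {α : Type*} [DecidableEq α]

lemma sup_parts_erase {s : Finset α} (P : Finpartition s) {b : Finset α} (hb : b ∈ P.parts) :
    (P.parts.erase b).sup id = s \ b := by
  ext y
  simp only [Finset.mem_sup, mem_erase, id, mem_sdiff]
  constructor
  · rintro ⟨d, ⟨hdb, hd⟩, hyd⟩
    exact ⟨P.le hd hyd, fun hyb => hdb (P.eq_of_mem_parts hd hb hyd hyb)⟩
  · rintro ⟨hys, hyb⟩
    obtain ⟨d, hd, hyd⟩ := P.exists_mem hys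
    exact ⟨d, ⟨fun h => hyb (h ▸ hyd), hd⟩, hyd⟩

lemma part_extend {a b c : Finset α} (P : Finpartition a) (hb : b ≠ ⊥) (hab : Disjoint a b)
    (hc : a ⊔ b = c) {x : α} (hx : x ∈ b) : (P.extend hb hab hc).part x = b :=
  part_eq_of_mem _ (by simp) hx

end Finpartition

section PartitionRecursion

variable {α : Type*} [DecidableEq α] {R : Type*} [CommSemiring R]

/-- Extending by the block `insert x (s \ v)` is a bijection from the partitions of `v`. -/
theorem sum_prod_parts_filter_sdiff_part_eq (g : Finset α → R) {x : α} {s v : Finset α}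
    (hx : x ∉ s) (hvs : v ⊆ s) :
    ∑ P : Finpartition (insert x s) with insert x s \ P.part x = v, ∏ b ∈ P.parts, g b =
      g (insert x (s \ v)) * ∑ Q : Finpartition v, ∏ b ∈ Q.parts, g b := by
  have hxs : x ∈ insert x s := mem_insert_self x s
  have hxv : x ∉ v := fun h => hx (hvs h)
  have hblock : ∀ P : Finpartition (insert x s), insert x s \ P.part x = v →
      P.part x = insert x (s \ v) := fun P hP => by
    rw [← Finset.sdiff_sdiff_eq_self (P.part_subset x), hP, insert_sdiff_of_notMem _ hxv]
  have hne : insert x (s \ v) ≠ ⊥ := insert_ne_empty _ _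
  have hdisj : Disjoint v (insert x (s \ v)) := by
    rw [disjoint_insert_right]
    exact ⟨hxv, disjoint_sdiff⟩
  have hsup : v ⊔ insert x (s \ v) = insert x s := by
    rw [sup_eq_union, union_insert, union_sdiff_of_subset hvs]
  have hrest : insert x s \ insert x (s \ v) = v := by
    rw [← hsup, sup_eq_union, union_sdiff_cancel_right hdisj]
  rw [mul_sum]
  refine sum_bij' (fun P hP => P.ofSubset (erase_subset _ P.parts)
      (by rw [P.sup_parts_erase (P.part_mem.2 hxs)]; exact (mem_filter.1 hP).2))
    (fun Q _ => Q.extend hne hdisj hsup) (fun _ _ => mem_univ _) (fun Q _ => ?_)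
    (fun P hP => ?_) (fun Q _ => ?_) (fun P hP => ?_)
  · rw [mem_filter, Finpartition.part_extend _ _ _ _ (mem_insert_self x _)]
    exact ⟨mem_univ _, hrest⟩
  · ext1
    rw [Finpartition.extend_parts, Finpartition.ofSubset_parts,
      ← hblock P (mem_filter.1 hP).2, insert_erase (P.part_mem.2 hxs)]
  · have hnot : insert x (s \ v) ∉ Q.parts := fun h => hxv (Q.le h (mem_insert_self x _))
    ext1
    rw [Finpartition.ofSubset_parts, Finpartition.part_extend _ _ _ _ (mem_insert_self x _),
      Finpartition.extend_parts, erase_insert hnot]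
  · rw [Finpartition.ofSubset_parts, ← mul_prod_erase _ _ (P.part_mem.2 hxs),
      hblock P (mem_filter.1 hP).2]

theorem sum_prod_parts_insert (g : Finset α → R) {x : α} {s : Finset α} (hx : x ∉ s) :
    ∑ P : Finpartition (insert x s), ∏ b ∈ P.parts, g b =
      ∑ v ∈ s.powerset, g (insert x (s \ v)) * ∑ Q : Finpartition v, ∏ b ∈ Q.parts, g b := by
  have hmaps : ∀ P ∈ (univ : Finset (Finpartition (insert x s))),
      insert x s \ P.part x ∈ s.powerset := fun P _ => by
    refine mem_powerset.2 fun y hy => ?_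
    rw [mem_sdiff, mem_insert] at hy
    exact hy.1.resolve_left fun h => hy.2 (h ▸ P.mem_part (mem_insert_self x s))
  rw [← sum_fiberwise_of_maps_to hmaps]
  exact sum_congr rfl fun v hv =>
    sum_prod_parts_filter_sdiff_part_eq g hx (mem_powerset.1 hv)

end PartitionRecursion

section ExpPowerSeries

variable {K : Type*} [Field K] {R : Type*} [CommRing R] [Algebra K R]

def egf (K : Type*) [Field K] [Algebra K R] (g : ℕ → R) : R⟦X⟧ :=
  mk fun n => (n ! : K)⁻¹ • g n

lemma coeff_pow_of_lt {z : R⟦X⟧} (hz : constantCoeff z = 0) {j m : ℕ} (h : m < j) :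
    coeff m (z ^ j) = 0 := by
  obtain ⟨w, hw⟩ := pow_dvd_pow_of_dvd (X_dvd_iff.2 hz) j
  rw [hw, coeff_X_pow_mul', if_neg (by omega)]

lemma coeff_expPS17_eq_sum {z : R⟦X⟧} (hz : constantCoeff z = 0) {m N : ℕ} (h : m < N) :
    coeff m (expPS17 (k := K) z) = ∑ j ∈ range N, (j ! : K)⁻¹ • coeff m (z ^ j) := by
  rw [expPS17, coeff_mk]
  refine sum_subset (range_subset_range.2 h) fun j _ hj => ?_
  rw [coeff_pow_of_lt hz (by simpa using hj), smul_zero]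

lemma coeff_zero_expPS17 (z : R⟦X⟧) : coeff 0 (expPS17 (k := K) z) = 1 := by
  simp [expPS17]

lemma constantCoeff_egf {g : ℕ → R} (hg : g 0 = 0) : constantCoeff (egf K g) = 0 := by
  simp [← coeff_zero_eq_constantCoeff_apply, egf, hg]

variable [CharZero K]

lemma inv_factorial_succ_mul (n : ℕ) : ((n + 1)! : K)⁻¹ * (n + 1) = (n ! : K)⁻¹ := by
  rw [Nat.factorial_succ, Nat.cast_mul, mul_inv, mul_right_comm, Nat.cast_succ,
    inv_mul_cancel₀ (Nat.cast_add_one_ne_zero n), one_mul]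

lemma derivative_expPS17 {z : R⟦X⟧} (hz : constantCoeff z = 0) :
    d⁄dX R (expPS17 (k := K) z) = expPS17 (k := K) z * d⁄dX R z := by
  ext m
  have hD : ∀ j : ℕ, ((j + 1)! : K)⁻¹ • coeff m (d⁄dX R (z ^ (j + 1))) =
      (j ! : K)⁻¹ • coeff m (z ^ j * d⁄dX R z) := fun j => by
    rw [derivative_pow, add_tsub_cancel_right, mul_assoc, ← nsmul_eq_mul, map_nsmul,
      ← Nat.cast_smul_eq_nsmul K, smul_smul, Nat.cast_succ, inv_factorial_succ_mul]
  calc coeff m (d⁄dX R (expPS17 (k := K) z))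
      = ∑ j ∈ range (m + 2), (j ! : K)⁻¹ • coeff m (d⁄dX R (z ^ j)) := by
        rw [coeff_derivative, expPS17, coeff_mk, sum_mul]
        refine sum_congr rfl fun j _ => ?_
        rw [coeff_derivative, smul_mul_assoc]
    _ = ∑ j ∈ range (m + 1), (j ! : K)⁻¹ • coeff m (z ^ j * d⁄dX R z) := by
        rw [sum_range_succ', pow_zero, derivative_one, map_zero, smul_zero, add_zero]
        exact sum_congr rfl fun j _ => hD j
    _ = ∑ pq ∈ antidiagonal m, coeff pq.1 (expPS17 (k := K) z) * coeff pq.2 (d⁄dX R z) := by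
        simp_rw [coeff_mul, smul_sum]
        rw [sum_comm]
        refine sum_congr rfl fun pq hpq => ?_
        rw [coeff_expPS17_eq_sum hz (Nat.antidiagonal.fst_lt hpq), sum_mul]
        simp_rw [smul_mul_assoc]
    _ = coeff m (expPS17 (k := K) z * d⁄dX R z) := (coeff_mul _ _ _).symm

lemma coeff_derivative_egf (g : ℕ → R) (n : ℕ) :
    coeff n (d⁄dX R (egf K g)) = (n ! : K)⁻¹ • g (n + 1) := by
  rw [coeff_derivative, egf, coeff_mk, smul_mul_assoc, mul_comm, ← Nat.cast_succ,
    ← nsmul_eq_mul, ← Nat.cast_smul_eq_nsmul K, smul_smul, Nat.cast_succ, inv_factorial_succ_mul]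

lemma factorial_smul_coeff_expPS17_egf_succ (g : ℕ → R) (hg : g 0 = 0) (n : ℕ) :
    ((n + 1)! : K) • coeff (n + 1) (expPS17 (k := K) (egf K g)) =
      ∑ i ∈ range (n + 1),
        n.choose i • (g (n - i + 1) * ((i ! : K) • coeff i (expPS17 (k := K) (egf K g)))) := by
  set E := expPS17 (k := K) (egf K g)
  have hE := congrArg (coeff n) (derivative_expPS17 (K := K) (constantCoeff_egf (K := K) hg))
  rw [coeff_derivative, coeff_mul, Nat.sum_antidiagonal_eq_sum_range_succ_mk] at hE
  calc ((n + 1)! : K) • coeff (n + 1) E = (n ! : K) • (coeff (n + 1) E * (n + 1)) := by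
        rw [Nat.factorial_succ, Nat.cast_mul, mul_comm, mul_smul, ← Nat.cast_succ (R := R),
          mul_comm, ← nsmul_eq_mul, ← Nat.cast_smul_eq_nsmul K]
    _ = _ := by
        rw [hE, smul_sum]
        refine sum_congr rfl fun i hi => ?_
        rw [coeff_derivative_egf, ← Nat.cast_smul_eq_nsmul K,
          Nat.cast_choose K (Nat.lt_succ_iff.1 (mem_range.1 hi))]
        simp only [mul_smul_comm, smul_mul_assoc, smul_smul, mul_comm (g _)]
        congr 1
        field_simp
        exact (mul_div_mul_right _ _ (Nat.cast_ne_zero.2 i.factorial_ne_zero)).symm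

theorem sum_prod_parts_eq_factorial_smul_coeff_expPS17_egf {α : Type*} [DecidableEq α]
    (g : ℕ → R) (hg : g 0 = 0) (s : Finset α) :
    ∑ P : Finpartition s, ∏ b ∈ P.parts, g #b =
      ((#s)! : K) • coeff #s (expPS17 (k := K) (egf K g)) := by
  induction s using Finset.strongInduction with
  | H s ih =>
    rcases s.eq_empty_or_nonempty with rfl | ⟨x, hx⟩
    · rw [← bot_eq_empty, Fintype.sum_unique, Finpartition.default_eq_empty]
      simp [coeff_zero_expPS17]
    · obtain ⟨t, hxt, rfl⟩ : ∃ t, x ∉ t ∧ insert x t = s :=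
        ⟨s.erase x, notMem_erase x s, insert_erase hx⟩
      rw [sum_prod_parts_insert (fun b => g #b) hxt, card_insert_of_notMem hxt,
        factorial_smul_coeff_expPS17_egf_succ g hg, ← sum_powerset_apply_card]
      refine sum_congr rfl fun v hv => ?_
      have hvt := mem_powerset.1 hv
      rw [ih v (hvt.trans_ssubset (ssubset_insert hxt)),
        card_insert_of_notMem (fun h => hxt (mem_sdiff.1 h).1), card_sdiff_of_subset hvt]

end ExpPowerSeries

theorem renormalized_exponential_general
    (ι : B →ₗ[k] S)
    (δS : S →ₐ[k] S ⊗[k] S)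
    (t : S →ₗ[k] k) (ht : t 1 = 1)
    (Λ : SBplus ι →ₗ[k] B) (a : B) :
    (PowerSeries.mk fun n =>
      if n = 0 then (1 : S) else ((n.factorial : k)⁻¹) • Tbar17 δS t ι Λ a n) =
    (PowerSeries.mk fun m =>
      Tord17 δS t (PowerSeries.coeff (R := S) m (expPS17 (k := k)
        (PowerSeries.mk fun n =>
          if h : 0 < n then
            ((n.factorial : k)⁻¹) • ι (Λ ⟨(ι a) ^ n, pow_mem_SBplus ι a n h⟩)
          else 0)))) := by
  set g : ℕ → S := fun n => if h : 0 < n then ι (Λ ⟨(ι a) ^ n, pow_mem_SBplus ι a n h⟩) else 0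
  have hz : (mk fun n => if h : 0 < n then
      ((n.factorial : k)⁻¹) • ι (Λ ⟨(ι a) ^ n, pow_mem_SBplus ι a n h⟩) else 0) = egf k g := by
    ext n
    simp only [egf, coeff_mk, g]
    split_ifs <;> simp
  have hTbar : ∀ n, Tbar17 δS t ι Λ a n =
      Tord17 δS t (∑ P : Finpartition (univ : Finset (Fin n)), ∏ b ∈ P.parts, g b.card) :=
    fun n => by
      rw [Tbar17, map_sum]
      refine sum_congr rfl fun P _ => congrArg _ ?_
      rw [← prod_attach P.parts]
      exact prod_congr rfl fun b _ => by simp only [g, dif_pos (partCardPos' P b.2)]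
  have hT1 : Tord17 δS t 1 = 1 := by
    simp [Tord17, Algebra.TensorProduct.one_def, ht]
  ext n
  rw [coeff_mk, coeff_mk, hz]
  rcases n with _ | n
  · rw [if_pos rfl, coeff_zero_expPS17, hT1]
  · rw [if_neg n.succ_ne_zero, hTbar,
      sum_prod_parts_eq_factorial_smul_coeff_expPS17_egf (K := k) g rfl, card_univ,
      Fintype.card_fin, map_smul, smul_smul,
      inv_mul_cancel₀ (Nat.cast_ne_zero.2 (Nat.factorial_ne_zero _)), one_smul]

/-- **Proposition 5**: `T̄(e^{λa}) = T(e^{λ ā(λ)})` as formal power series in `λ` with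
coefficients in `S(B)`, where `ā(λ) = Σ_{n ≥ 1} λ^{n-1} Λ(a^n)/n! = Λ((e^{λa}-1)/λ)`.
Here `S` is the symmetric bialgebra `S(B)` of the commutative bialgebra `B`:
it is generated as an algebra by the image of `ι : B → S`, and its coproduct `δS`
is the algebra map induced by the comultiplication of `B`. -/
theorem renormalized_exponential
    (ι : B →ₗ[k] S)
    (hgen : Algebra.adjoin k (Set.range ι) = ⊤)
    (δS : S →ₐ[k] S ⊗[k] S)
    (hδ : ∀ b : B, δS (ι b) = TensorProduct.map ι ι (Coalgebra.comul b))
    (t : S →ₗ[k] k) (ht : t 1 = 1)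
    (Λ : SBplus ι →ₗ[k] B) (a : B) :
    (PowerSeries.mk fun n =>
      if n = 0 then (1 : S) else ((n.factorial : k)⁻¹) • Tbar17 δS t ι Λ a n) =
    (PowerSeries.mk fun m =>
      Tord17 δS t (PowerSeries.coeff (R := S) m (expPS17 (k := k)
        (PowerSeries.mk fun n =>
          if h : 0 < n then
            ((n.factorial : k)⁻¹) • ι (Λ ⟨(ι a) ^ n, pow_mem_SBplus ι a n h⟩)
          else 0)))) :=
  renormalized_exponential_general ι δS t ht Λ a
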